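/- Let f : M³ → Q⁴_ε × ℝ be biconservative with nonzero parallel H and dim E_0(H) = 2, with adapted frame X₁ = T/‖T‖, X₂ spanning E_0(H) and X₃ ⊥ E_0(H). Then the Levi-Civita connection satisfies ∇_{X₁}X₁ = φ₁X₂, ∇_{X₁}X₂ = −φ₁X₁, ∇_{X₂}X₁ = φ₂X₂, ∇_{X₂}X₂ = −φ₂X₁, and ∇_{X_i}X₃ = 0, ∇_{X₃}X_j = 0 for all i, j; in particular the integral curves of X₃ are geodesics of M³. -/

import Mathlib

open scoped BigOperators

/-! Abstract model of an isometric immersion `f : M^m → Q^n_ε × ℝ ⊂ E^{n+2}`,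
where `Q^n_ε` is the unit sphere (`ε = 1`) or hyperbolic space (`ε = -1`) and
`E^{n+2}` is Euclidean or Lorentzian space.  Here `R` plays the role of the ring
of smooth functions on `M`, `TM` of the tangent vector fields of `M`, `NM` of
the normal vector fields along `f` (normal inside `T(Q^n_ε × ℝ)`), and `AM` of
the vector fields along `f` with values in `E^{n+2}`. -/

/-- The curvature tensor of the product `Q^n_ε × ℝ`:
`R̃(Z,W)V = ε (⟨W',V'⟩ Z' - ⟨Z',V'⟩ W')`, where `Z' = Z - ⟨Z,∂t⟩ ∂t` is the
component of `Z` tangent to the `Q^n_ε`-factor. -/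
def prodCurv {R AM : Type*} [CommRing R] [Algebra ℝ R] [AddCommGroup AM] [Module R AM]
    (ε : ℝ) (g : AM →ₗ[R] AM →ₗ[R] R) (dt : AM) (Z W V : AM) : AM :=
  algebraMap ℝ R ε •
    ((g W V - g W dt * g V dt) • (Z - g Z dt • dt)
      - (g Z V - g Z dt * g V dt) • (W - g W dt • dt))

structure Setup (ε : ℝ) (m : ℕ) (R : Type*) [CommRing R] [Algebra ℝ R]
    (TM NM AM : Type*) [AddCommGroup TM] [Module R TM]
    [AddCommGroup NM] [Module R NM] [AddCommGroup AM] [Module R AM] : Type _ where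
  /-- the differential of `f` -/
  ι : TM →ₗ[R] AM
  /-- the inclusion of the normal bundle -/
  ν : NM →ₗ[R] AM
  /-- tangential projection -/
  tanPr : AM →ₗ[R] TM
  /-- normal projection -/
  norPr : AM →ₗ[R] NM
  split : ∀ Z, ι (tanPr Z) + ν (norPr Z) = Z
  tan_ι : ∀ X, tanPr (ι X) = X
  nor_ν : ∀ ξ, norPr (ν ξ) = ξ
  nor_ι : ∀ X, norPr (ι X) = 0
  tan_ν : ∀ ξ, tanPr (ν ξ) = 0
  /-- the (possibly Lorentzian) metric of `E^{n+2}` along `f` -/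
  g : AM →ₗ[R] AM →ₗ[R] R
  g_symm : ∀ Z W, g Z W = g W Z
  g_tan_nor : ∀ X ξ, g (ι X) (ν ξ) = 0
  /-- the action of a tangent vector field on a function -/
  act : TM → R → R
  act_add : ∀ X a b, act X (a + b) = act X a + act X b
  act_mul : ∀ X a b, act X (a * b) = a * act X b + b * act X a
  act_const : ∀ X (r : ℝ), act X (algebraMap ℝ R r) = 0
  /-- the Lie bracket of vector fields on `M` -/
  bracket : TM → TM → TM
  /-- the Levi-Civita connection of `Q^n_ε × ℝ` along `f` -/
  D : TM → AM → AM
  D_add : ∀ X Z W, D X (Z + W) = D X Z + D X W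
  D_smul : ∀ X (a : R) Z, D X (a • Z) = act X a • Z + a • D X Z
  /-- the Levi-Civita connection of `M` -/
  conn : TM → TM → TM
  conn_add : ∀ X Y Z, conn X (Y + Z) = conn X Y + conn X Z
  conn_smul : ∀ X (a : R) Y, conn X (a • Y) = act X a • Y + a • conn X Y
  /-- the normal connection `∇^⊥` -/
  nconn : TM → NM → NM
  nconn_add : ∀ X ξ ζ, nconn X (ξ + ζ) = nconn X ξ + nconn X ζ
  nconn_smul : ∀ X (a : R) ξ, nconn X (a • ξ) = act X a • ξ + a • nconn X ξ
  /-- the second fundamental form `α_f` -/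
  alpha : TM →ₗ[R] TM →ₗ[R] NM
  alpha_symm : ∀ X Y, alpha X Y = alpha Y X
  /-- the shape operators `A_ξ` -/
  A : NM →ₗ[R] TM →ₗ[R] TM
  shape : ∀ ξ X Y, g (ι (A ξ X)) (ι Y) = g (ν (alpha X Y)) (ν ξ)
  /-- the Gauss formula -/
  gauss : ∀ X Y, D X (ι Y) = ι (conn X Y) + ν (alpha X Y)
  /-- the Weingarten formula -/
  weingarten : ∀ X ξ, D X (ν ξ) = - ι (A ξ X) + ν (nconn X ξ)
  metric : ∀ X Z W, act X (g Z W) = g (D X Z) W + g Z (D X W)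
  torsion : ∀ X Y, conn X Y - conn Y X = bracket X Y
  /-- the Codazzi equation in `Q^n_ε × ℝ` -/
  codazzi : ∀ X Y Z,
    (nconn X (alpha Y Z) - alpha (conn X Y) Z - alpha Y (conn X Z))
      - (nconn Y (alpha X Z) - alpha (conn Y X) Z - alpha X (conn Y Z))
      = norPr (prodCurv ε g dt (ι X) (ι Y) (ι Z))
  /-- the Ricci equation in `Q^n_ε × ℝ` -/
  ricci : ∀ X Y ξ,
    nconn X (nconn Y ξ) - nconn Y (nconn X ξ) - nconn (bracket X Y) ξ
      = norPr (prodCurv ε g dt (ι X) (ι Y) (ν ξ))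
        + alpha X (A ξ Y) - alpha (A ξ X) Y
  /-- the unit vector field tangent to the `ℝ`-factor -/
  dt : AM
  dt_parallel : ∀ X, D X dt = 0
  dt_unit : g dt dt = 1
  /-- the position vector field, i.e. `f` itself, regarded in `E^{n+2}` -/
  pos : AM
  /-- the flat connection `∇̂` of `E^{n+2}` along `f` -/
  Dhat : TM → AM → AM
  Dhat_add : ∀ X Z W, Dhat X (Z + W) = Dhat X Z + Dhat X W
  Dhat_smul : ∀ X (a : R) Z, Dhat X (a • Z) = act X a • Z + a • Dhat X Z
  Dhat_pos : ∀ X, Dhat X pos = ι X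
  Dhat_dt : ∀ X, Dhat X dt = 0
  Dhat_metric : ∀ X Z W, act X (g Z W) = g (Dhat X Z) W + g Z (Dhat X W)
  /-- relation between `∇̂` and the connection of `Q^n_ε × ℝ` via the second
  fundamental form of the inclusion `Q^n_ε × ℝ ⊂ E^{n+2}` -/
  Dhat_ι : ∀ X Y, Dhat X (ι Y) = D X (ι Y)
    - (algebraMap ℝ R ε * (g (ι X) (ι Y) - g (ι X) dt * g (ι Y) dt)) •
        (pos - g pos dt • dt)
  Dhat_ν : ∀ X ξ, Dhat X (ν ξ) = D X (ν ξ)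
    - (algebraMap ℝ R ε * (g (ι X) (ν ξ) - g (ι X) dt * g (ν ξ) dt)) •
        (pos - g pos dt • dt)
  /-- `f` takes values in `Q^n_ε × ℝ` -/
  pos_norm : g (pos - g pos dt • dt) (pos - g pos dt • dt) = algebraMap ℝ R ε

namespace Setup

variable {ε : ℝ} {m : ℕ} {R TM NM AM : Type*} [CommRing R] [Algebra ℝ R]
  [AddCommGroup TM] [Module R TM] [AddCommGroup NM] [Module R NM]
  [AddCommGroup AM] [Module R AM]

variable (S : Setup ε m R TM NM AM)

/-- the tangent part `T` of `∂t`, so that `∂t = f_* T + η` -/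
def T : TM := S.tanPr S.dt

/-- the normal part `η` of `∂t`, so that `∂t = f_* T + η` -/
def eta : NM := S.norPr S.dt

/-- the induced metric on `M` -/
def gT (X Y : TM) : R := S.g (S.ι X) (S.ι Y)

/-- the metric of the normal bundle -/
def gN (ξ ζ : NM) : R := S.g (S.ν ξ) (S.ν ζ)

/-- the curvature tensor `R̃` of `Q^n_ε × ℝ` along `f` -/
def Rcurv (Z W V : AM) : AM := prodCurv ε S.g S.dt Z W V

/-- `e` is a (local) orthonormal tangent frame of `M` -/
def IsONFrame (e : Fin m → TM) : Prop :=
  (∀ i j, S.gT (e i) (e j) = if i = j then 1 else 0) ∧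
  (∀ X : TM, X = ∑ i, S.gT X (e i) • e i)

/-- `H` is the mean curvature vector field: `m H = trace α_f` -/
def IsMeanCurv (e : Fin m → TM) (H : NM) : Prop :=
  (m : R) • H = ∑ i, S.alpha (e i) (e i)

/-- `H` is parallel in the normal bundle -/
def IsParallelN (H : NM) : Prop := ∀ X, S.nconn X H = 0

/-- `f` is biconservative: the tangent part of the bitension field vanishes,
i.e. `m grad‖H‖² + 4 trace A_{∇^⊥H} + 4 trace (R̃(·,H)·)^T = 0` (paired with an
arbitrary tangent field `Y`, which expresses the gradient term weakly). -/
def Biconservative (e : Fin m → TM) (H : NM) : Prop :=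
  ∀ Y : TM,
    (m : R) * S.act Y (S.gN H H)
      + 4 * (∑ i, S.gT (S.A (S.nconn (e i) H) (e i)) Y)
      + 4 * (∑ i, S.gT (S.tanPr (S.Rcurv (S.ι (e i)) (S.ν H) (S.ι (e i)))) Y) = 0

/-- the normal part of the bitension field vanishes:
`trace α_f(A_H ·, ·) - Δ^⊥ H + 2 trace (R̃(·,H)·)^⊥ = 0` -/
def NormalBitensionZero (e : Fin m → TM) (H : NM) : Prop :=
  (∑ i, S.alpha (S.A H (e i)) (e i))
    - (∑ i, (S.nconn (e i) (S.nconn (e i) H) - S.nconn (S.conn (e i) (e i)) H))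
    + 2 • (∑ i, S.norPr (S.Rcurv (S.ι (e i)) (S.ν H) (S.ι (e i)))) = 0

/-- `f` is biharmonic: the full bitension field vanishes. -/
def Biharmonic (e : Fin m → TM) (H : NM) : Prop :=
  S.Biconservative e H ∧ S.NormalBitensionZero e H

/-- a vector field is nowhere vanishing (in the function-ring model: it is not
annihilated by any nonzero function) -/
def NowhereZero (_S₀ : Setup ε m R TM NM AM) (X : TM) : Prop :=
  ∀ a : R, a • X = 0 → a = 0

/-- a normal field is nowhere vanishing -/
def NowhereZeroN (_S₀ : Setup ε m R TM NM AM) (ξ : NM) : Prop :=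
  ∀ a : R, a • ξ = 0 → a = 0

/-- `f` belongs to the class `𝒜`: `T` is an eigenvector of every shape
operator of `f` -/
def ClassA : Prop := ∀ ξ : NM, ∃ r : R, S.A ξ S.T = r • S.T

end Setup

/-- The symmetric bilinear form of `E⁶` (Euclidean for `ε = 1`, Lorentzian for
`ε = -1`), the last coordinate corresponding to the `ℝ`-factor of `Q⁴_ε × ℝ`. -/
def bform (ε : ℝ) (v w : Fin 6 → ℝ) : ℝ :=
  v 0 * w 0 + v 1 * w 1 + v 2 * w 2 + v 3 * w 3 + ε * (v 4 * w 4) + v 5 * w 5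

/-! Biconservativity with `∇^⊥H = 0` leaves only the curvature term of the tangent part of the
bitension field, `4ε(m - 1)⟨H, η⟩ T`; as `T` vanishes nowhere, `H ⊥ ∂t`. Hence `R̃(X, Y)H = 0` and
`⟨R̃(X, Y)Z, H⟩ = 0` for tangent `X, Y, Z`: by the Ricci equation `A_H` commutes with every `A_ξ`,
and by the Codazzi equation `∇A_H` is symmetric. In the frame, `A_H = diag(0, 0, μ)` with
`μ = 3‖H‖²` constant, and `μ` is not a zero divisor of the function ring (the model's `μ ≠ 0`)
because `ker A_H` is spanned by `e 0, e 1`. Codazzi then gives `⟨∇_{e i} e j, e 2⟩ = 0` for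
`j ≠ 2`, Ricci gives `α(e 1, e 2) = 0`, and `∇T = A_η` with `T = t e 0` turns the latter into
`t ⟨∇_{e 2} e 0, e 1⟩ = ⟨α(e 2, e 1), η⟩ = 0`. -/

namespace Setup

open nonZeroDivisors

variable {ε : ℝ} {m : ℕ} {R TM NM AM : Type*} [CommRing R] [Algebra ℝ R]
  [AddCommGroup TM] [Module R TM] [AddCommGroup NM] [Module R NM]
  [AddCommGroup AM] [Module R AM]

section Bilinear

variable (S : Setup ε m R TM NM AM)

theorem gT_symm (X Y : TM) : S.gT X Y = S.gT Y X := S.g_symm _ _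

theorem gN_symm (ξ ζ : NM) : S.gN ξ ζ = S.gN ζ ξ := S.g_symm _ _

@[simp] theorem gT_smul_left (a : R) (X Y : TM) : S.gT (a • X) Y = a * S.gT X Y := by
  simp [gT]

@[simp] theorem gT_add_left (X Y Z : TM) : S.gT (X + Y) Z = S.gT X Z + S.gT Y Z := by
  simp [gT]

@[simp] theorem gT_neg_left (X Y : TM) : S.gT (-X) Y = - S.gT X Y := by
  simp [gT]

@[simp] theorem gT_zero_left (Y : TM) : S.gT 0 Y = 0 := by
  simp [gT]

@[simp] theorem gN_smul_left (a : R) (ξ ζ : NM) : S.gN (a • ξ) ζ = a * S.gN ξ ζ := by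
  simp [gN]

@[simp] theorem gN_add_left (ξ ζ χ : NM) : S.gN (ξ + ζ) χ = S.gN ξ χ + S.gN ζ χ := by
  simp [gN]

@[simp] theorem gN_sub_left (ξ ζ χ : NM) : S.gN (ξ - ζ) χ = S.gN ξ χ - S.gN ζ χ := by
  simp [gN]

@[simp] theorem gN_neg_left (ξ ζ : NM) : S.gN (-ξ) ζ = - S.gN ξ ζ := by
  simp [gN]

@[simp] theorem gN_zero_left (ζ : NM) : S.gN 0 ζ = 0 := by
  simp [gN]

@[simp] theorem gN_zero_right (ξ : NM) : S.gN ξ 0 = 0 := by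
  simp [gN]

@[simp] theorem g_ι_ι (X Y : TM) : S.g (S.ι X) (S.ι Y) = S.gT X Y := rfl

@[simp] theorem g_ν_ν (ξ ζ : NM) : S.g (S.ν ξ) (S.ν ζ) = S.gN ξ ζ := rfl

@[simp] theorem g_ι_ν (X : TM) (ξ : NM) : S.g (S.ι X) (S.ν ξ) = 0 := S.g_tan_nor X ξ

@[simp] theorem g_ν_ι (ξ : NM) (X : TM) : S.g (S.ν ξ) (S.ι X) = 0 := by
  rw [S.g_symm, g_ι_ν]

theorem ι_T_add_ν_eta : S.ι S.T + S.ν S.eta = S.dt := S.split S.dt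

@[simp] theorem g_ι_dt (X : TM) : S.g (S.ι X) S.dt = S.gT X S.T := by
  simp [← ι_T_add_ν_eta]

@[simp] theorem g_ν_dt (ξ : NM) : S.g (S.ν ξ) S.dt = S.gN ξ S.eta := by
  simp [← ι_T_add_ν_eta]

@[simp] theorem tanPr_dt : S.tanPr S.dt = S.T := rfl

@[simp] theorem norPr_dt : S.norPr S.dt = S.eta := rfl

theorem gT_A (ξ : NM) (X Y : TM) : S.gT (S.A ξ X) Y = S.gN (S.alpha X Y) ξ := S.shape ξ X Y

theorem gT_A_swap (ξ : NM) (X Y : TM) : S.gT (S.A ξ X) Y = S.gT (S.A ξ Y) X := by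
  rw [gT_A, gT_A, S.alpha_symm]

end Bilinear

section Connections

variable (S : Setup ε m R TM NM AM)

@[simp] theorem act_algebraMap (X : TM) (r : ℝ) : S.act X (algebraMap ℝ R r) = 0 :=
  S.act_const X r

@[simp] theorem act_zero (X : TM) : S.act X 0 = 0 := by
  simpa using S.act_const X 0

@[simp] theorem act_one (X : TM) : S.act X 1 = 0 := by
  simpa using S.act_const X 1

@[simp] theorem nconn_zero (X : TM) : S.nconn X 0 = 0 := by
  simpa using S.nconn_smul X 0 0

theorem act_gT (X Y Z : TM) :
    S.act X (S.gT Y Z) = S.gT (S.conn X Y) Z + S.gT Y (S.conn X Z) := by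
  simpa [S.gauss] using S.metric X (S.ι Y) (S.ι Z)

theorem act_gN (X : TM) (ξ ζ : NM) :
    S.act X (S.gN ξ ζ) = S.gN (S.nconn X ξ) ζ + S.gN ξ (S.nconn X ζ) := by
  simpa [S.weingarten] using S.metric X (S.ν ξ) (S.ν ζ)

theorem conn_T (X : TM) : S.conn X S.T = S.A S.eta X := by
  have h := congrArg S.tanPr (S.dt_parallel X)
  rw [← ι_T_add_ν_eta, S.D_add, S.gauss, S.weingarten] at h
  simpa [S.tan_ι, S.tan_ν, add_eq_zero_iff_eq_neg] using h

end Connections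

theorem isUnit_algebraMap {r : ℝ} (hr : r ≠ 0) : IsUnit (algebraMap ℝ R r) :=
  (isUnit_iff_ne_zero.mpr hr).map _

section Frame

variable {S : Setup ε m R TM NM AM} {e : Fin m → TM}

theorem IsONFrame.gT_eq (he : S.IsONFrame e) (i j : Fin m) :
    S.gT (e i) (e j) = if i = j then 1 else 0 :=
  he.1 i j

theorem IsONFrame.ext (he : S.IsONFrame e) {X Y : TM}
    (h : ∀ k, S.gT X (e k) = S.gT Y (e k)) : X = Y := by
  rw [he.2 X, he.2 Y]
  simp only [h]

theorem IsONFrame.gT_conn_antisymm (he : S.IsONFrame e) (X : TM) (j k : Fin m) :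
    S.gT (S.conn X (e j)) (e k) = - S.gT (S.conn X (e k)) (e j) := by
  have h := S.act_gT X (e j) (e k)
  rw [he.gT_eq] at h
  split_ifs at h <;> simp only [act_one, act_zero] at h <;>
    linear_combination -h - S.gT_symm (e j) (S.conn X (e k))

theorem IsONFrame.gT_conn_self (he : S.IsONFrame e) (X : TM) (j : Fin m) :
    S.gT (S.conn X (e j)) (e j) = 0 := by
  have h := he.gT_conn_antisymm X j j
  refine ((isUnit_algebraMap (two_ne_zero' ℝ)).mul_right_eq_zero).mp ?_
  rw [map_ofNat]
  linear_combination h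

end Frame

section Curvature

variable (S : Setup ε m R TM NM AM)

theorem gT_sum_left {ι : Type*} (s : Finset ι) (v : ι → TM) (Y : TM) :
    S.gT (∑ i ∈ s, v i) Y = ∑ i ∈ s, S.gT (v i) Y := by
  simp only [gT, map_sum, LinearMap.sum_apply]

theorem tanPr_Rcurv_ι_ν_ι (X V : TM) (ξ : NM) :
    S.tanPr (S.Rcurv (S.ι X) (S.ν ξ) (S.ι V))
      = (algebraMap ℝ R ε * S.gN ξ S.eta) • (S.gT X V • S.T - S.gT V S.T • X) := by
  simp only [Rcurv, prodCurv, map_smul, map_sub, S.tan_ι, S.tan_ν, tanPr_dt, g_ι_ι, g_ν_ι,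
    g_ι_dt, g_ν_dt]
  module

theorem Rcurv_ι_ι_ν_eq_zero {ξ : NM} (hξ : S.gN ξ S.eta = 0) (X Y : TM) :
    S.Rcurv (S.ι X) (S.ι Y) (S.ν ξ) = 0 := by
  simp [Rcurv, prodCurv, hξ]

theorem gN_norPr_Rcurv_ι_ι_ι_eq_zero {ξ : NM} (hξ : S.gN S.eta ξ = 0) (X Y Z : TM) :
    S.gN (S.norPr (S.Rcurv (S.ι X) (S.ι Y) (S.ι Z))) ξ = 0 := by
  simp [Rcurv, prodCurv, S.nor_ι, hξ]

end Curvature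

theorem IsONFrame.sum_tanPr_Rcurv {S : Setup ε m R TM NM AM} {e : Fin m → TM}
    (he : S.IsONFrame e) (ξ : NM) :
    ∑ i, S.tanPr (S.Rcurv (S.ι (e i)) (S.ν ξ) (S.ι (e i)))
      = (algebraMap ℝ R ε * S.gN ξ S.eta * ((m : R) - 1)) • S.T := by
  have hT : ∑ i, S.gT (e i) S.T • e i = S.T := by
    simp_rw [S.gT_symm (e _)]
    exact (he.2 _).symm
  simp only [tanPr_Rcurv_ι_ν_ι, he.gT_eq, if_true, one_smul, ← Finset.smul_sum,
    Finset.sum_sub_distrib, Finset.sum_const, Finset.card_univ, Fintype.card_fin, hT]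
  module

theorem Biconservative.gN_eta_eq_zero {S : Setup ε m R TM NM AM} {e : Fin m → TM} {H : NM}
    (hbic : S.Biconservative e H) (hε : ε ≠ 0) (hm : 1 < m) (he : S.IsONFrame e)
    (hpar : S.IsParallelN H) (hT : S.NowhereZero S.T) : S.gN H S.eta = 0 := by
  have hunit : IsUnit (algebraMap ℝ R (4 * ε * ((m : ℝ) - 1))) :=
    isUnit_algebraMap (mul_ne_zero (mul_ne_zero four_ne_zero hε)
      (sub_ne_zero.mpr (by exact_mod_cast hm.ne')))
  refine hT _ (he.ext fun k => ?_)
  have h := hbic (e k)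
  simp only [S.act_gN, hpar _, gN_zero_left, gN_zero_right, add_zero, map_zero,
    LinearMap.zero_apply, gT_zero_left, Finset.sum_const_zero, ← gT_sum_left,
    he.sum_tanPr_Rcurv, gT_smul_left] at h
  rw [gT_smul_left, gT_zero_left, ← hunit.mul_right_eq_zero]
  simp only [map_mul, map_sub, map_ofNat, map_natCast, map_one]
  linear_combination h

theorem mem_nonZeroDivisors_of_nowhereZero {S : Setup ε m R TM NM AM} {X E : TM} {t : R}
    (hX : S.NowhereZero X) (hXE : X = t • E) : t ∈ R⁰ :=
  mem_nonZeroDivisors_iff_right.mpr fun x hx => hX x (by rw [hXE, smul_smul, hx, zero_smul])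

theorem mul_gT_conn_of_T_eq_smul (S : Setup ε m R TM NM AM) {t : R} {E Y : TM}
    (hTt : S.T = t • E) (hEY : S.gT E Y = 0) (X : TM) :
    t * S.gT (S.conn X E) Y = S.gN (S.alpha X Y) S.eta := by
  have h := congrArg (S.gT · Y) (S.conn_T X)
  simpa [hTt, S.conn_smul, hEY, gT_A] using h

section ParallelMeanCurvature

variable (S : Setup ε m R TM NM AM) {H : NM}

theorem act_gN_of_parallel (hpar : S.IsParallelN H) (X : TM) (ξ : NM) :
    S.act X (S.gN ξ H) = S.gN (S.nconn X ξ) H := by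
  rw [act_gN, hpar, gN_zero_right, add_zero]

theorem codazzi_A_of_parallel (hpar : S.IsParallelN H) (hHη : S.gN H S.eta = 0)
    (X Y Z : TM) :
    S.act X (S.gT (S.A H Y) Z) - S.gT (S.A H (S.conn X Y)) Z - S.gT (S.A H Y) (S.conn X Z)
      = S.act Y (S.gT (S.A H X) Z) - S.gT (S.A H (S.conn Y X)) Z
          - S.gT (S.A H X) (S.conn Y Z) := by
  have h := congrArg (S.gN · H) (S.codazzi (dt := S.dt) X Y Z)
  simp only [gN_sub_left, ← S.act_gN_of_parallel hpar] at h
  rw [← Rcurv, S.gN_norPr_Rcurv_ι_ι_ι_eq_zero (by rwa [gN_symm])] at h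
  simp only [gT_A]
  linear_combination h

theorem alpha_A_comm_of_parallel (hpar : S.IsParallelN H) (hHη : S.gN H S.eta = 0)
    (X Y : TM) : S.alpha X (S.A H Y) = S.alpha (S.A H X) Y := by
  have h := S.ricci (dt := S.dt) X Y H
  rw [← Rcurv, S.Rcurv_ι_ι_ν_eq_zero hHη, hpar, hpar, hpar, nconn_zero, nconn_zero,
    map_zero, zero_add, sub_self, sub_zero] at h
  exact sub_eq_zero.mp h.symm

theorem gN_alpha_eq_zero_of_eigen (hpar : S.IsParallelN H) (hHη : S.gN H S.eta = 0)
    {X Y : TM} {μ : R} (hX : S.A H X = 0) (hY : S.A H Y = μ • Y) (hμ : μ ∈ R⁰) (ξ : NM) :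
    S.gN (S.alpha X Y) ξ = 0 := by
  have h := S.alpha_A_comm_of_parallel hpar hHη X Y
  rw [hX, hY, map_smul, map_zero, LinearMap.zero_apply] at h
  rw [← mul_left_mem_nonZeroDivisors_eq_zero_iff hμ]
  simpa using congrArg (S.gN · ξ) h

end ParallelMeanCurvature

section Frame3

variable {S : Setup ε 3 R TM NM AM} {e : Fin 3 → TM}

theorem IsONFrame.conn_zero_eq (he : S.IsONFrame e) {X : TM}
    (h : S.gT (S.conn X (e 0)) (e 2) = 0) :
    S.conn X (e 0) = S.gT (S.conn X (e 0)) (e 1) • e 1 :=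
  he.ext fun k => by fin_cases k <;> simp [he.gT_eq, he.gT_conn_self, h]

theorem IsONFrame.conn_one_eq (he : S.IsONFrame e) {X : TM}
    (h : S.gT (S.conn X (e 1)) (e 2) = 0) :
    S.conn X (e 1) = - (S.gT (S.conn X (e 0)) (e 1) • e 0) :=
  he.ext fun k => by
    fin_cases k <;> simp [he.gT_eq, he.gT_conn_self, h, he.gT_conn_antisymm X 1 0]

theorem IsONFrame.conn_two_eq_zero (he : S.IsONFrame e) {X : TM}
    (h₀ : S.gT (S.conn X (e 0)) (e 2) = 0) (h₁ : S.gT (S.conn X (e 1)) (e 2) = 0) :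
    S.conn X (e 2) = 0 :=
  he.ext fun k => by
    fin_cases k <;>
      simp [he.gT_conn_self, he.gT_conn_antisymm X 2 0, he.gT_conn_antisymm X 2 1, h₀, h₁]

variable {H : NM}

theorem IsONFrame.A_two_of_isMeanCurv (he : S.IsONFrame e) (hH : S.IsMeanCurv e H)
    (h₀ : S.A H (e 0) = 0) (h₁ : S.A H (e 1) = 0) :
    S.A H (e 2) = (3 * S.gN H H) • e 2 := by
  have htrace := congrArg (S.gN · H) hH
  simp only [Fin.sum_univ_three, gN_smul_left, gN_add_left, ← gT_A, h₀, h₁,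
    gT_zero_left, zero_add, Nat.cast_ofNat] at htrace
  refine he.ext fun k => ?_
  fin_cases k <;> simp [he.gT_eq, S.gT_A_swap H (e 2), h₀, h₁, htrace]

theorem IsONFrame.A_eq_of_eigen (he : S.IsONFrame e) {μ : R}
    (h₀ : S.A H (e 0) = 0) (h₁ : S.A H (e 1) = 0) (h₂ : S.A H (e 2) = μ • e 2) (X : TM) :
    S.A H X = (μ * S.gT X (e 2)) • e 2 := by
  conv_lhs => rw [he.2 X]
  simp [Fin.sum_univ_three, h₀, h₁, h₂, smul_smul, mul_comm]

theorem IsONFrame.mem_nonZeroDivisors_of_ker (he : S.IsONFrame e) {μ : R}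
    (hker : ∀ X, S.A H X = 0 → ∃ c d : R, X = c • e 0 + d • e 1)
    (h₂ : S.A H (e 2) = μ • e 2) : μ ∈ R⁰ := by
  refine mem_nonZeroDivisors_iff_right.mpr fun x hx => ?_
  obtain ⟨c, d, h⟩ := hker (x • e 2) (by rw [map_smul, h₂, smul_smul, hx, zero_smul])
  simpa [he.gT_eq] using congrArg (S.gT · (e 2)) h

theorem IsONFrame.gT_conn_two_eq_zero (he : S.IsONFrame e) {μ : R}
    (hpar : S.IsParallelN H) (hHη : S.gN H S.eta = 0)
    (hA : ∀ X, S.A H X = (μ * S.gT X (e 2)) • e 2) (hμ : μ ∈ R⁰) (hμc : ∀ X, S.act X μ = 0)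
    (i : Fin 3) {j : Fin 3} (hj : j ≠ 2) : S.gT (S.conn (e i) (e j)) (e 2) = 0 := by
  rw [← mul_right_mem_nonZeroDivisors_eq_zero_iff hμ]
  by_cases hi : i = 2
  · have h := S.codazzi_A_of_parallel hpar hHη (e j) (e 2) (e 2)
    simp only [hA, he.gT_eq, ↓reduceIte, mul_one, gT_smul_left, hμc, he.gT_conn_self, mul_zero,
      zero_smul, gT_zero_left, sub_self, S.gT_symm (e 2) (S.conn _ _), hj, act_zero, zero_sub,
      sub_zero, zero_eq_neg] at h
    rw [hi]
    linear_combination h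
  · have h := S.codazzi_A_of_parallel hpar hHη (e i) (e 2) (e j)
    simp only [hA, he.gT_eq, ↓reduceIte, mul_one, gT_smul_left, hj.symm, mul_zero, act_zero,
      sub_self, S.gT_symm (e 2) (S.conn _ _), zero_sub, hi, zero_smul, gT_zero_left,
      neg_eq_zero] at h
    linear_combination h

end Frame3

end Setup

theorem stmt_16_general {ε : ℝ} (hε : ε = 1 ∨ ε = -1) {R TM NM AM : Type*}
    [CommRing R] [Algebra ℝ R] [AddCommGroup TM] [Module R TM]
    [AddCommGroup NM] [Module R NM] [AddCommGroup AM] [Module R AM]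
    (S : Setup ε 3 R TM NM AM)
    (e : Fin 3 → TM) (he : S.IsONFrame e) (H : NM) (hH : S.IsMeanCurv e H)
    (hpar : S.IsParallelN H) (hbic : S.Biconservative e H)
    (hE0 : ∀ X : TM, S.A H X = 0 ↔ ∃ c d : R, X = c • e 0 + d • e 1)
    (hT0 : ∃ t : R, S.T = t • e 0) (hT : S.NowhereZero S.T) :
    ∃ φ₁ φ₂ : R,
      S.conn (e 0) (e 0) = φ₁ • e 1 ∧ S.conn (e 0) (e 1) = - (φ₁ • e 0) ∧
      S.conn (e 1) (e 0) = φ₂ • e 1 ∧ S.conn (e 1) (e 1) = - (φ₂ • e 0) ∧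
      (∀ i : Fin 3, S.conn (e i) (e 2) = 0) ∧
      S.conn (e 2) (e 0) = 0 ∧ S.conn (e 2) (e 1) = 0 ∧
      S.conn (e 2) (e 2) = 0 := by
  obtain ⟨t, hTt⟩ := hT0
  have hHη : S.gN H S.eta = 0 :=
    hbic.gN_eta_eq_zero (by rcases hε with rfl | rfl <;> norm_num) (by norm_num) he hpar hT
  have h₀ : S.A H (e 0) = 0 := (hE0 _).2 ⟨1, 0, by simp⟩
  have h₁ : S.A H (e 1) = 0 := (hE0 _).2 ⟨0, 1, by simp⟩
  have h₂ := he.A_two_of_isMeanCurv hH h₀ h₁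
  have hμ := he.mem_nonZeroDivisors_of_ker (fun X => (hE0 X).1) h₂
  have hμc (X : TM) : S.act X (3 * S.gN H H) = 0 := by
    rw [S.act_mul, S.act_gN_of_parallel hpar, hpar, Setup.gN_zero_left,
      ← map_ofNat (algebraMap ℝ R), S.act_algebraMap]
    ring
  have hΓ (i j : Fin 3) (hj : j ≠ 2) : S.gT (S.conn (e i) (e j)) (e 2) = 0 :=
    he.gT_conn_two_eq_zero hpar hHη (he.A_eq_of_eigen h₀ h₁ h₂) hμ hμc i hj
  have ht : t ∈ nonZeroDivisors R := Setup.mem_nonZeroDivisors_of_nowhereZero hT hTt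
  have hΓ₂₀₁ : S.gT (S.conn (e 2) (e 0)) (e 1) = 0 := by
    rw [← mul_left_mem_nonZeroDivisors_eq_zero_iff ht,
      S.mul_gT_conn_of_T_eq_smul hTt (by simp [he.gT_eq]), S.alpha_symm,
      S.gN_alpha_eq_zero_of_eigen hpar hHη h₁ h₂ hμ]
  refine ⟨_, _, he.conn_zero_eq (hΓ 0 0 (by decide)), he.conn_one_eq (hΓ 0 1 (by decide)),
    he.conn_zero_eq (hΓ 1 0 (by decide)), he.conn_one_eq (hΓ 1 1 (by decide)),
    fun i => he.conn_two_eq_zero (hΓ i 0 (by decide)) (hΓ i 1 (by decide)), ?_, ?_,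
    he.conn_two_eq_zero (hΓ 2 0 (by decide)) (hΓ 2 1 (by decide))⟩
  · rw [he.conn_zero_eq (hΓ 2 0 (by decide)), hΓ₂₀₁, zero_smul]
  · rw [he.conn_one_eq (hΓ 2 1 (by decide)), hΓ₂₀₁, zero_smul, neg_zero]

/-- For `f : M³ → Q⁴_ε × ℝ` biconservative with nonzero parallel `H` and
`dim E_0(H) = 2`, in the adapted frame `X₁ = T/‖T‖, X₂, X₃` the Levi-Civita
connection satisfies the stated relations; in particular the integral curves of
`X₃` are geodesics. -/
theorem stmt_16 {ε : ℝ} (hε : ε = 1 ∨ ε = -1) {R TM NM AM : Type*}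
    [CommRing R] [Algebra ℝ R] [AddCommGroup TM] [Module R TM]
    [AddCommGroup NM] [Module R NM] [AddCommGroup AM] [Module R AM]
    (S : Setup ε 3 R TM NM AM)
    (e : Fin 3 → TM) (he : S.IsONFrame e) (H : NM) (hH : S.IsMeanCurv e H)
    (hpar : S.IsParallelN H) (hH0 : H ≠ 0) (hbic : S.Biconservative e H)
    (hE0 : ∀ X : TM, S.A H X = 0 ↔ ∃ c d : R, X = c • e 0 + d • e 1)
    (ξ₁ ξ₂ : NM) (nH nE : R) (hu1 : S.gN ξ₁ ξ₁ = 1) (hH1 : H = nH • ξ₁)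
    (hu2 : S.gN ξ₂ ξ₂ = 1) (hetadec : S.eta = nE • ξ₂)
    (hspan : ∀ ζ : NM, ∃ r s : R, ζ = r • ξ₁ + s • ξ₂)
    (hT0 : ∃ t : R, S.T = t • e 0) (hT : S.NowhereZero S.T) :
    ∃ φ₁ φ₂ : R,
      S.conn (e 0) (e 0) = φ₁ • e 1 ∧ S.conn (e 0) (e 1) = - (φ₁ • e 0) ∧
      S.conn (e 1) (e 0) = φ₂ • e 1 ∧ S.conn (e 1) (e 1) = - (φ₂ • e 0) ∧
      (∀ i : Fin 3, S.conn (e i) (e 2) = 0) ∧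
      S.conn (e 2) (e 0) = 0 ∧ S.conn (e 2) (e 1) = 0 ∧
      S.conn (e 2) (e 2) = 0 :=
  stmt_16_general hε S e he H hH hpar hbic hE0 hT0 hT
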